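/- arXiv:2603.19032 — 7 statements merged into one kernel-verified Lean document; each statement's English description precedes it below -/
import Mathlib

section
/- Let g : ℝⁿ → ℝᵐ be continuously differentiable with each component gᵢ convex, and let Ω = {x ∈ ℝⁿ : gᵢ(x) ≤ 0 for all i ∈ {1,…,m}}. Let γ : [0,1] → ℝⁿ be the quadratic Bézier curve with control points P₀, P₁, P₂ ∈ ℝⁿ, and assume P₀ ∈ Ω and P₁ ∈ Ω. If there exist t̂ ∈ (0,1] and an index i ∈ {1,…,m} such that gᵢ(γ(t̂)) > 0, then gᵢ(P₂) > 0. -/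
/-- Lemma CHinfeas: if `P₀, P₁` are feasible for the convex constraints `g`
and the quadratic Bézier curve violates constraint `i` at some `t̂ ∈ (0,1]`, then the third
control point `P₂` violates constraint `i` as well. -/
theorem stmt_2 {n m : ℕ} (g : EuclideanSpace ℝ (Fin n) → Fin m → ℝ)
    (hg_smooth : ∀ i, ContDiff ℝ 1 (fun y => g y i))
    (hg_conv : ∀ i, ConvexOn ℝ Set.univ (fun y => g y i))
    (P₀ P₁ P₂ : EuclideanSpace ℝ (Fin n))
    (γ : ℝ → EuclideanSpace ℝ (Fin n))
    (hγ : ∀ t, γ t = (1 - t) ^ 2 • P₀ + (2 * t * (1 - t)) • P₁ + t ^ 2 • P₂)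
    (hP₀ : ∀ i, g P₀ i ≤ 0) (hP₁ : ∀ i, g P₁ i ≤ 0)
    (that : ℝ) (hthat : that ∈ Set.Ioc (0 : ℝ) 1)
    (i : Fin m) (hviol : 0 < g (γ that) i) :
    0 < g P₂ i := by
  obtain ⟨ht0, ht1⟩ := hthat
  set t := that
  set w : Fin 3 → ℝ := ![(1 - t) ^ 2, 2 * t * (1 - t), t ^ 2] with hw
  set p : Fin 3 → EuclideanSpace ℝ (Fin n) := ![P₀, P₁, P₂] with hp
  have hw0 : ∀ j ∈ Finset.univ, 0 ≤ w j := by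
    intro j _
    fin_cases j <;> simp [hw] <;> nlinarith
  have hw1 : ∑ j, w j = 1 := by
    simp [hw, Fin.sum_univ_three]; ring
  have hmem : ∀ j ∈ Finset.univ, p j ∈ (Set.univ : Set (EuclideanSpace ℝ (Fin n))) := by
    intro j _; trivial
  have hsum : γ t = ∑ j, w j • p j := by
    rw [hγ]; simp [hw, hp, Fin.sum_univ_three]
  have hjensen := (hg_conv i).map_sum_le hw0 hw1 hmem
  rw [← hsum] at hjensen
  simp [hw, hp, Fin.sum_univ_three] at hjensen
  have h0 : 0 ≤ (1 - t) ^ 2 := sq_nonneg _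
  have h1 : 0 ≤ 2 * t * (1 - t) := by nlinarith
  nlinarith [hP₀ i, hP₁ i, mul_nonneg h0 (neg_nonneg.mpr (hP₀ i)),
    mul_nonneg h1 (neg_nonneg.mpr (hP₁ i)), sq_nonneg t, mul_pos ht0 ht0]
end

section
/- Let g : ℝⁿ → ℝᵐ be continuously differentiable with each component gᵢ convex, and let Ω = {x ∈ ℝⁿ : gᵢ(x) ≤ 0 for all i ∈ {1,…,m}}. Let x ∈ Ω and let d ∈ ℝⁿ satisfy x + α·d ∈ Ω for all α ∈ [0,1]. Let s ∈ ℝⁿ and define the quadratic search curve γ(t) = x + t·d + t²·(s − d) for t ∈ [0,1]. Let t̃ ∈ (0,1), set x̃ = x + t̃·d, and let Ĩ = {i ∈ {1,…,m} : gᵢ(x̃) = 0} be the set of constraints active at x̃. If gᵢ(x + s) ≤ 0 for all i ∈ Ĩ, then γ is a feasible curve for Ω at x; that is, there exists t̄ ∈ (0,1] such that γ(t) ∈ Ω for all t ∈ [0, t̄]. -/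
set_option maxHeartbeats 1000000 in
/-- Proposition: feasibility of the curve: if `x ∈ Ω`, `d` is a feasible
direction at `x` with `ᾱ = 1`, and the point `x + s` satisfies all constraints active at
`x̃ = x + t̃·d`, then the quadratic search curve `γ(t) = x + t·d + t²·(s − d)` is a feasible
curve for `Ω` at `x`. -/
theorem stmt_3 {n m : ℕ} (g : EuclideanSpace ℝ (Fin n) → Fin m → ℝ)
    (hg_smooth : ∀ i, ContDiff ℝ 1 (fun y => g y i))
    (hg_conv : ∀ i, ConvexOn ℝ Set.univ (fun y => g y i))
    (x d s : EuclideanSpace ℝ (Fin n))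
    (hx : ∀ i, g x i ≤ 0)
    (hd_feas : ∀ α ∈ Set.Icc (0 : ℝ) 1, ∀ i, g (x + α • d) i ≤ 0)
    (ttil : ℝ) (httil : ttil ∈ Set.Ioo (0 : ℝ) 1)
    (hactive : ∀ i, g (x + ttil • d) i = 0 → g (x + s) i ≤ 0)
    (γ : ℝ → EuclideanSpace ℝ (Fin n))
    (hγ : ∀ t, γ t = x + t • d + t ^ 2 • (s - d)) :
    ∃ tbar ∈ Set.Ioc (0 : ℝ) 1, ∀ t ∈ Set.Icc (0 : ℝ) tbar, ∀ i, g (γ t) i ≤ 0 := by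
  obtain ⟨ht0, ht1⟩ := httil
  set xt := x + ttil • d with hxt
  have hxt_feas : ∀ i, g xt i ≤ 0 := hd_feas ttil ⟨ht0.le, ht1.le⟩
  set τ : Fin m → ℝ := fun i => if g xt i = 0 then 1
    else (-(g xt i)) / (2 * ttil * max (g (x + s) i) 1) with hτ
  have hτpos : ∀ i, 0 < τ i := by
    intro i
    by_cases h : g xt i = 0
    · simp [hτ, h]
    · have hc : g xt i < 0 := lt_of_le_of_ne (hxt_feas i) h
      simp only [hτ, if_neg h]
      apply div_pos (by linarith)
      have : (0:ℝ) < max (g (x + s) i) 1 := lt_max_of_lt_right one_pos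
      positivity
  set S : Finset ℝ := insert (min (1/2) ttil) (Finset.image τ Finset.univ) with hS
  have hSne : S.Nonempty := Finset.insert_nonempty _ _
  set tbar := S.min' hSne with htbar
  have htbar_pos : 0 < tbar := by
    have hmem := S.min'_mem hSne
    rw [← htbar, hS] at hmem
    rcases Finset.mem_insert.1 hmem with h | h
    · rw [h]; exact lt_min (by norm_num) ht0
    · obtain ⟨i, _, hi⟩ := Finset.mem_image.1 h
      rw [← hi]; exact hτpos i
  have htbar_le : tbar ≤ min (1/2) ttil := S.min'_le _ (Finset.mem_insert_self _ _)
  have htbar_leτ : ∀ i, tbar ≤ τ i := fun i =>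
    S.min'_le _ (Finset.mem_insert_of_mem (Finset.mem_image_of_mem _ (Finset.mem_univ i)))
  refine ⟨tbar, ⟨htbar_pos, le_trans htbar_le (le_trans (min_le_left _ _) (by norm_num))⟩, ?_⟩
  rintro t ⟨ht0', htle⟩ i
  have ht_half : t ≤ 1/2 := le_trans htle (le_trans htbar_le (min_le_left _ _))
  have ht_ttil : t ≤ ttil := le_trans htle (le_trans htbar_le (min_le_right _ _))
  set α := t / (1 + t) with hα
  have h1t : (0:ℝ) < 1 + t := by linarith
  have hα0 : 0 ≤ α := div_nonneg ht0' h1t.le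
  have hαt : α ≤ t := by rw [hα, div_le_iff₀ h1t]; nlinarith
  set θ := α / ttil with hθ
  have hθ0 : 0 ≤ θ := div_nonneg hα0 ht0.le
  have hθ1 : θ ≤ 1 := by rw [hθ, div_le_one ht0]; linarith
  have hid1 : γ t = (1 - t^2) • (x + α • d) + t^2 • (x + s) := by
    rw [hγ]
    have hαval : (1 - t^2) * α = t - t^2 := by
      rw [hα]; field_simp; ring
    have h2 : (1 - t^2) • (x + α • d) + t^2 • (x + s)
        = x + ((1 - t^2) * α) • d + t^2 • s := by module
    rw [h2, hαval]; module
  have hid2 : x + α • d = (1 - θ) • x + θ • xt := by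
    have hθval : θ * ttil = α := by rw [hθ]; field_simp
    rw [hxt]
    have h2 : (1 - θ) • x + θ • (x + ttil • d) = x + (θ * ttil) • d := by module
    rw [h2, hθval]
  have hconv1 := (hg_conv i).2 (Set.mem_univ (x + α • d)) (Set.mem_univ (x + s))
    (by nlinarith : (0:ℝ) ≤ 1 - t^2) (by positivity : (0:ℝ) ≤ t^2) (by ring)
  have hconv2 := (hg_conv i).2 (Set.mem_univ x) (Set.mem_univ xt)
    (by linarith : (0:ℝ) ≤ 1 - θ) hθ0 (by ring)
  simp only [smul_eq_mul] at hconv1 hconv2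
  rw [← hid2] at hconv2
  rw [← hid1] at hconv1
  have key : g (γ t) i ≤ (1 - t^2) * ((1-θ) * g x i + θ * g xt i) + t^2 * g (x+s) i := by
    have := mul_le_mul_of_nonneg_left hconv2 (by nlinarith : (0:ℝ) ≤ 1 - t^2)
    calc g (γ t) i ≤ (1 - t^2) * g (x + α • d) i + t^2 * g (x+s) i := hconv1
      _ ≤ _ := by linarith
  have hθt : (1 - t^2) * θ = t * (1-t) / ttil := by
    rw [hθ, hα]; field_simp; ring
  have hfirst : (1 - t^2) * ((1-θ) * g x i) ≤ 0 := by
    have h1 : (0:ℝ) ≤ (1 - t^2) * (1-θ) := mul_nonneg (by nlinarith [ht_half, ht0']) (by linarith)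
    nlinarith [hx i, h1]
  by_cases hact : g xt i = 0
  · have hs := hactive i hact
    rw [hact] at key
    nlinarith
  · have hc : g xt i < 0 := lt_of_le_of_ne (hxt_feas i) hact
    have hτi : τ i = (-(g xt i)) / (2 * ttil * max (g (x + s) i) 1) := by
      simp only [hτ, if_neg hact]
    have hM : (0:ℝ) < max (g (x + s) i) 1 := lt_max_of_lt_right one_pos
    have htτ : t ≤ (-(g xt i)) / (2 * ttil * max (g (x + s) i) 1) := by
      rw [← hτi]; exact le_trans htle (htbar_leτ i)
    have ht2 : t * (2 * ttil * max (g (x + s) i) 1) ≤ -(g xt i) := by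
      rw [← le_div_iff₀ (by positivity)]; exact htτ
    have hMle : g (x + s) i ≤ max (g (x + s) i) 1 := le_max_left _ _
    have hsecond : (1 - t^2) * (θ * g xt i) + t^2 * g (x+s) i ≤ 0 := by
      have h3 : (1 - t^2) * (θ * g xt i) = (t * (1-t) / ttil) * g xt i := by
        rw [← mul_assoc, hθt]
      have hnum : t * (1 - t) * g xt i + t ^ 2 * g (x + s) i * ttil ≤ 0 := by
        have e0 : (1 - t) * g xt i ≤ (1/2) * g xt i := by
          nlinarith [mul_nonpos_of_nonneg_of_nonpos (show (0:ℝ) ≤ 1/2 - t by linarith) hc.le]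
        have e1 : t * ((1 - t) * g xt i) ≤ t * ((1/2) * g xt i) :=
          mul_le_mul_of_nonneg_left e0 ht0'
        have e2 : t * (t * (2 * ttil * max (g (x + s) i) 1)) ≤ t * (-(g xt i)) :=
          mul_le_mul_of_nonneg_left ht2 ht0'
        have e3 : (t^2 * ttil) * g (x + s) i ≤ (t^2 * ttil) * max (g (x + s) i) 1 :=
          mul_le_mul_of_nonneg_left hMle (by positivity)
        nlinarith [e1, e2, e3]
      rw [h3, div_mul_eq_mul_div, div_add' _ _ _ (ne_of_gt ht0), div_nonpos_iff]
      exact Or.inr ⟨hnum, ht0.le⟩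
    nlinarith
end

section
/- Let g : ℝⁿ → ℝᵐ be continuously differentiable with each component gᵢ convex, let Ω = {x ∈ ℝⁿ : gᵢ(x) ≤ 0 for all i ∈ {1,…,m}}, and suppose x ∈ Ω, d ∈ ℝⁿ satisfies x + α·d ∈ Ω for all α ∈ [0,1], and s ∈ ℝⁿ satisfies x + s ∈ Ω. Then the quadratic search curve γ(t) = x + t·d + t²·(s − d) satisfies γ(t) ∈ Ω for all t ∈ [0,1]. -/
/-- if `x ∈ Ω`, `d` is a feasible direction at `x` with `ᾱ = 1`, and
`x + s ∈ Ω`, then the quadratic search curve `γ(t) = x + t·d + t²·(s − d)` is entirely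
feasible on `[0,1]`. -/
theorem stmt_4 {n m : ℕ} (g : EuclideanSpace ℝ (Fin n) → Fin m → ℝ)
    (hg_smooth : ∀ i, ContDiff ℝ 1 (fun y => g y i))
    (hg_conv : ∀ i, ConvexOn ℝ Set.univ (fun y => g y i))
    (x d s : EuclideanSpace ℝ (Fin n))
    (hx : ∀ i, g x i ≤ 0)
    (hd_feas : ∀ α ∈ Set.Icc (0 : ℝ) 1, ∀ i, g (x + α • d) i ≤ 0)
    (hs_feas : ∀ i, g (x + s) i ≤ 0)
    (γ : ℝ → EuclideanSpace ℝ (Fin n))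
    (hγ : ∀ t, γ t = x + t • d + t ^ 2 • (s - d)) :
    ∀ t ∈ Set.Icc (0 : ℝ) 1, ∀ i, g (γ t) i ≤ 0 := by
  rintro t ⟨ht0, ht1⟩ i
  have h1t : (0:ℝ) ≤ 1 - t := by linarith
  have hsum : (1 - t) + t = 1 := by ring
  -- x + t•s is feasible
  have hts : g (x + t • s) i ≤ 0 := by
    have := (hg_conv i).2 (Set.mem_univ x) (Set.mem_univ (x + s)) h1t ht0 hsum
    have hpt : (1 - t) • x + t • (x + s) = x + t • s := by module
    rw [hpt] at this
    calc g (x + t • s) i ≤ (1 - t) * g x i + t * g (x + s) i := this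
      _ ≤ 0 := by nlinarith [hx i, hs_feas i]
  -- x + t•d is feasible
  have htd : g (x + t • d) i ≤ 0 := hd_feas t ⟨ht0, ht1⟩ i
  -- γ t is the convex combination
  have hcomb : (1 - t) • (x + t • d) + t • (x + t • s) = γ t := by
    rw [hγ]; module
  have := (hg_conv i).2 (Set.mem_univ (x + t • d)) (Set.mem_univ (x + t • s)) h1t ht0 hsum
  rw [hcomb] at this
  calc g (γ t) i ≤ (1 - t) * g (x + t • d) i + t * g (x + t • s) i := this
    _ ≤ 0 := by nlinarith
end

section
/- Let f : ℝⁿ → ℝ be continuously differentiable, let g : ℝⁿ → ℝᵐ be continuously differentiable with each component gᵢ convex, and let Ω = {x ∈ ℝⁿ : gᵢ(x) ≤ 0 for all i ∈ {1,…,m}}. Let x ∈ Ω, let d ∈ ℝⁿ satisfy x + α·d ∈ Ω for all α ∈ [0,1] and ∇f(x)ᵀd < 0, let s ∈ ℝⁿ, let σ, δ ∈ (0,1) and t̃ ∈ (0,1), and let γ(t) = x + t·d + t²·(s − d). Assume that either s = d, or gᵢ(x + s) ≤ 0 for every index i with gᵢ(x + t̃·d) = 0. Then the Armijo-type curve search terminates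 finitely: there exists h ∈ ℕ such that γ(δ^h) ∈ Ω and f(γ(δ^h)) ≤ f(x) + σ·δ^h·∇f(x)ᵀd. Moreover, letting h* be the least such h and t* = δ^{h*}, either t* = 1, or γ(t*/δ) ∉ Ω, or f(γ(t*/δ)) > f(x) + σ·(t*/δ)·∇f(x)ᵀd. -/
/-!
Write `γ t = x + t • d + t² • (s - d)`. Since `γ 0 = x` and `γ' 0 = d`, the slope of `f ∘ γ` at
`0⁺` tends to `∇f(x)ᵀd < σ ∇f(x)ᵀd`, so the sufficient decrease test holds for all small `t > 0`.
For feasibility, `γ t` is the convex combination `(1 - t²) (x + t/(1+t) • d) + t² (x + s)`, so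
`gᵢ (γ t) ≤ (1 - t²) gᵢ (x + t/(1+t) • d) + t² gᵢ (x + s)`. If `gᵢ` vanishes at `x + t̃ d`, both
terms are nonpositive; otherwise convexity along the segment `[x, x + t̃ d]` makes the first term
of order `-t` while the second is `O(t²)`. Both conditions therefore hold for `δ^h` with `h` large,
and if the first success `h*` is positive, the stepsize `δ^(h* - 1) = t*/δ` failed.
-/

open Filter Topology Set

theorem HasDerivAt.eventually_nhdsGT_le_add_mul {φ : ℝ → ℝ} {L c : ℝ} (hφ : HasDerivAt φ L 0)
    (hc : L < c) : ∀ᶠ t in 𝓝[>] (0 : ℝ), φ t ≤ φ 0 + c * t := by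
  filter_upwards [hφ.hasDerivWithinAt.limsup_slope_le' (by simp) hc, self_mem_nhdsWithin]
    with t hslope (ht : 0 < t)
  rw [slope_def_field, sub_zero, div_lt_iff₀ ht] at hslope
  linarith

theorem hasDerivAt_add_smul_add_sq_smul {E : Type*} [NormedAddCommGroup E] [NormedSpace ℝ E]
    (x d s : E) : HasDerivAt (fun t : ℝ => x + t • d + t ^ 2 • (s - d)) d 0 := by
  convert (((hasDerivAt_id (0 : ℝ)).smul_const d).const_add x).add
    ((hasDerivAt_pow 2 (0 : ℝ)).smul_const (s - d)) using 1
  · rfl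
  · simp

namespace ConvexOn

variable {E : Type*} [AddCommGroup E] [Module ℝ E] {G : E → ℝ} {x d s : E}

theorem apply_add_smul_le_div_mul (hG : ConvexOn ℝ univ G) (hx : G x ≤ 0) {α τ : ℝ}
    (hα : 0 ≤ α) (hατ : α ≤ τ) (hτ : 0 < τ) : G (x + α • d) ≤ α / τ * G (x + τ • d) := by
  have hθ0 : 0 ≤ α / τ := div_nonneg hα hτ.le
  have hθ1 : α / τ ≤ 1 := (div_le_one hτ).2 hατ
  have hcomb : (1 - α / τ) • x + (α / τ) • (x + τ • d) = x + α • d := by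
    rw [smul_add, smul_smul, div_mul_cancel₀ α hτ.ne']
    module
  have := hG.2 (mem_univ x) (mem_univ (x + τ • d)) (sub_nonneg.2 hθ1) hθ0 (by ring)
  rw [hcomb, smul_eq_mul, smul_eq_mul] at this
  nlinarith

theorem apply_add_smul_add_sq_smul_le (hG : ConvexOn ℝ univ G) {t : ℝ} (ht0 : 0 ≤ t)
    (ht1 : t ≤ 1) : G (x + t • d + t ^ 2 • (s - d)) ≤
      (1 - t ^ 2) * G (x + (t / (1 + t)) • d) + t ^ 2 * G (x + s) := by
  have hcomb : (1 - t ^ 2) • (x + (t / (1 + t)) • d) + t ^ 2 • (x + s) =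
      x + t • d + t ^ 2 • (s - d) := by
    have : (1 - t ^ 2) * (t / (1 + t)) = t - t ^ 2 := by
      field_simp
      ring
    rw [smul_add, smul_smul, this]
    module
  rw [← hcomb]
  exact hG.2 (mem_univ _) (mem_univ _) (by nlinarith) (by positivity) (by ring)

theorem eventually_nhdsGT_apply_add_smul_add_sq_smul_nonpos (hG : ConvexOn ℝ univ G)
    (hd : ∀ α ∈ Icc (0 : ℝ) 1, G (x + α • d) ≤ 0) {τ : ℝ} (hτ : τ ∈ Ioc (0 : ℝ) 1)
    (hs : G (x + τ • d) = 0 → G (x + s) ≤ 0) :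
    ∀ᶠ t in 𝓝[>] (0 : ℝ), G (x + t • d + t ^ 2 • (s - d)) ≤ 0 := by
  have hsmall : ∀ᶠ t in 𝓝[>] (0 : ℝ), t < τ :=
    (eventually_lt_nhds hτ.1).filter_mono nhdsWithin_le_nhds
  have hx : G x ≤ 0 := by simpa using hd 0 (left_mem_Icc.2 zero_le_one)
  rcases (hd τ (Ioc_subset_Icc_self hτ)).eq_or_lt with hzero | hneg
  · filter_upwards [hsmall, self_mem_nhdsWithin] with t htτ (ht : 0 < t)
    have hα : t / (1 + t) ∈ Icc (0 : ℝ) 1 :=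
      ⟨by positivity, (div_le_one (by positivity)).2 (by linarith)⟩
    have hcurve := apply_add_smul_add_sq_smul_le (x := x) (d := d) (s := s) hG ht.le
      (htτ.le.trans hτ.2)
    have h1t : 0 ≤ 1 - t ^ 2 := by nlinarith [htτ.le.trans hτ.2]
    linarith [mul_nonpos_of_nonneg_of_nonpos h1t (hd _ hα),
      mul_nonpos_of_nonneg_of_nonpos (sq_nonneg t) (hs hzero)]
  · -- the bound equals `t * B t` with `B` affine and `B 0 = G (x + τ • d) / τ < 0`
    set B : ℝ → ℝ := fun t => (1 - t) / τ * G (x + τ • d) + t * G (x + s)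
    have hB : ∀ᶠ t in 𝓝[>] (0 : ℝ), B t < 0 := by
      refine (Continuous.tendsto (by fun_prop) 0).eventually_lt_const ?_ |>.filter_mono
        nhdsWithin_le_nhds
      simpa [B, div_eq_inv_mul] using div_neg_of_neg_of_pos hneg hτ.1
    filter_upwards [hsmall, hB, self_mem_nhdsWithin] with t htτ hBt (ht : 0 < t)
    have hατ : t / (1 + t) ≤ τ := (div_le_self ht.le (by linarith)).trans htτ.le
    have hsegment := hG.apply_add_smul_le_div_mul (d := d) hx (by positivity) hατ hτ.1
    have hcurve := apply_add_smul_add_sq_smul_le (x := x) (d := d) (s := s) hG ht.le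
      (htτ.le.trans hτ.2)
    have hidentity : (1 - t ^ 2) * (t / (1 + t) / τ * G (x + τ • d)) + t ^ 2 * G (x + s) =
        t * B t := by
      simp only [B]
      field_simp
      ring
    have h1t : 0 ≤ 1 - t ^ 2 := by nlinarith [htτ.le.trans hτ.2]
    linarith [mul_le_mul_of_nonneg_left hsegment h1t, mul_neg_of_pos_of_neg ht hBt]

end ConvexOn

theorem stmt_6_general {n m : ℕ}
    (f : EuclideanSpace ℝ (Fin n) → ℝ) (hf : ContDiff ℝ 1 f)
    (g : EuclideanSpace ℝ (Fin n) → Fin m → ℝ)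
    (hg_conv : ∀ i, ConvexOn ℝ Set.univ (fun y => g y i))
    (x d s : EuclideanSpace ℝ (Fin n))
    (hd_feas : ∀ α ∈ Set.Icc (0 : ℝ) 1, ∀ i, g (x + α • d) i ≤ 0)
    (hd_desc : fderiv ℝ f x d < 0)
    (σ δ : ℝ) (hσ : σ ∈ Set.Ioo (0 : ℝ) 1) (hδ : δ ∈ Set.Ioo (0 : ℝ) 1)
    (ttil : ℝ) (httil : ttil ∈ Set.Ioo (0 : ℝ) 1)
    (γ : ℝ → EuclideanSpace ℝ (Fin n))
    (hγ : ∀ t, γ t = x + t • d + t ^ 2 • (s - d))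
    (hsd : s = d ∨ ∀ i, g (x + ttil • d) i = 0 → g (x + s) i ≤ 0) :
    (∃ h : ℕ, (∀ i, g (γ (δ ^ h)) i ≤ 0) ∧
        f (γ (δ ^ h)) ≤ f x + σ * δ ^ h * fderiv ℝ f x d) ∧
    (∀ hstar : ℕ,
      ((∀ i, g (γ (δ ^ hstar)) i ≤ 0) ∧
        f (γ (δ ^ hstar)) ≤ f x + σ * δ ^ hstar * fderiv ℝ f x d) →
      (∀ h' < hstar, ¬ ((∀ i, g (γ (δ ^ h')) i ≤ 0) ∧
        f (γ (δ ^ h')) ≤ f x + σ * δ ^ h' * fderiv ℝ f x d)) →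
      (δ ^ hstar = 1 ∨ (∃ i, 0 < g (γ (δ ^ hstar / δ)) i) ∨
        f (γ (δ ^ hstar / δ)) > f x + σ * (δ ^ hstar / δ) * fderiv ℝ f x d)) := by
  obtain rfl : γ = _ := funext hγ
  have hs : ∀ i, g (x + ttil • d) i = 0 → g (x + s) i ≤ 0 := by
    rcases hsd with rfl | hsd
    · exact fun i _ => by simpa using hd_feas 1 (right_mem_Icc.2 zero_le_one) i
    · exact hsd
  have hfeas : ∀ᶠ t in 𝓝[>] (0 : ℝ), ∀ i, g (x + t • d + t ^ 2 • (s - d)) i ≤ 0 :=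
    eventually_all.2 fun i => (hg_conv i).eventually_nhdsGT_apply_add_smul_add_sq_smul_nonpos
      (hd_feas · · i) ⟨httil.1, httil.2.le⟩ (hs i)
  have hdecrease : ∀ᶠ t in 𝓝[>] (0 : ℝ),
      f (x + t • d + t ^ 2 • (s - d)) ≤ f x + σ * t * fderiv ℝ f x d := by
    have hderiv := (hf.differentiable one_ne_zero x).hasFDerivAt.comp_hasDerivAt_of_eq 0
      (hasDerivAt_add_smul_add_sq_smul x d s) (by simp)
    filter_upwards [hderiv.eventually_nhdsGT_le_add_mul (c := σ * fderiv ℝ f x d)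
      (by nlinarith [hσ.2])] with t ht
    simpa [mul_right_comm] using ht
  refine ⟨(tendsto_pow_atTop_nhdsWithin_zero_of_lt_one hδ.1 hδ.2).eventually
    (hfeas.and hdecrease) |>.exists, fun hstar _ hmin => ?_⟩
  rcases hstar with _ | k
  · exact Or.inl (pow_zero δ)
  · rw [pow_succ, mul_div_cancel_right₀ _ hδ.1.ne']
    have hfail := hmin k k.lt_succ_self
    rw [not_and_or, not_forall, not_le] at hfail
    exact Or.inr (hfail.imp (fun ⟨i, hi⟩ => ⟨i, not_le.1 hi⟩) id)

/-- Proposition ACSprop: finite termination of the Armijo-type curve search,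
and characterization of the returned stepsize `t* = δ^{h*}`: either `t* = 1`, or the
previously tested stepsize `t*/δ` is infeasible or fails the sufficient decrease test. -/
theorem stmt_6 {n m : ℕ}
    (f : EuclideanSpace ℝ (Fin n) → ℝ) (hf : ContDiff ℝ 1 f)
    (g : EuclideanSpace ℝ (Fin n) → Fin m → ℝ)
    (hg_smooth : ∀ i, ContDiff ℝ 1 (fun y => g y i))
    (hg_conv : ∀ i, ConvexOn ℝ Set.univ (fun y => g y i))
    (x d s : EuclideanSpace ℝ (Fin n))
    (hx : ∀ i, g x i ≤ 0)
    (hd_feas : ∀ α ∈ Set.Icc (0 : ℝ) 1, ∀ i, g (x + α • d) i ≤ 0)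
    (hd_desc : fderiv ℝ f x d < 0)
    (σ δ : ℝ) (hσ : σ ∈ Set.Ioo (0 : ℝ) 1) (hδ : δ ∈ Set.Ioo (0 : ℝ) 1)
    (ttil : ℝ) (httil : ttil ∈ Set.Ioo (0 : ℝ) 1)
    (γ : ℝ → EuclideanSpace ℝ (Fin n))
    (hγ : ∀ t, γ t = x + t • d + t ^ 2 • (s - d))
    (hsd : s = d ∨ ∀ i, g (x + ttil • d) i = 0 → g (x + s) i ≤ 0) :
    (∃ h : ℕ, (∀ i, g (γ (δ ^ h)) i ≤ 0) ∧
        f (γ (δ ^ h)) ≤ f x + σ * δ ^ h * fderiv ℝ f x d) ∧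
    (∀ hstar : ℕ,
      ((∀ i, g (γ (δ ^ hstar)) i ≤ 0) ∧
        f (γ (δ ^ hstar)) ≤ f x + σ * δ ^ hstar * fderiv ℝ f x d) →
      (∀ h' < hstar, ¬ ((∀ i, g (γ (δ ^ h')) i ≤ 0) ∧
        f (γ (δ ^ h')) ≤ f x + σ * δ ^ h' * fderiv ℝ f x d)) →
      (δ ^ hstar = 1 ∨ (∃ i, 0 < g (γ (δ ^ hstar / δ)) i) ∨
        f (γ (δ ^ hstar / δ)) > f x + σ * (δ ^ hstar / δ) * fderiv ℝ f x d)) :=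
  stmt_6_general f hf g hg_conv x d s hd_feas hd_desc σ δ hσ hδ ttil httil γ hγ hsd
end

section
/- Let f : ℝⁿ → ℝ be continuously differentiable, let g : ℝⁿ → ℝᵐ be continuously differentiable with each component gᵢ convex, and let Ω = {x ∈ ℝⁿ : gᵢ(x) ≤ 0 for all i ∈ {1,…,m}}. Let x ∈ Ω, let d ∈ ℝⁿ satisfy x + α·d ∈ Ω for all α ∈ [0,1] and ∇f(x)ᵀd < 0, let s ∈ ℝⁿ, let σ, δ ∈ (0,1) and t̃ ∈ (0,1), let γ(t) = x + t·d + t²·(s − d), and let F ∈ ℝ satisfy F ≥ f(x) (for instance F = max over a finite memory window of past objective values including f(x)). Assume that either s = d, or gᵢ(x + s) ≤ 0 for every index i with gᵢ(x + t̃·d) = 0. Then the non-monotone Armijo-type curve search terminates finitely: there exists h ∈ ℕ such that γ(δ^h) ∈ Ω and f(γ(δ^h)) ≤ F + σ·δ^h·∇f(x)ᵀd. Moreover, letting h* be the least such h and t* = δ^{h*}, either t* = 1, or γ(t*/δ) ∉ Ω, or f(γ(t*/δ)) > F + σ·(t*/δ)·∇f(x)ᵀd. -/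
/-!
Along `γ(t) = x + t d + t² (s - d)` we have `γ(0) = x` and `γ'(0) = d`, so the descent condition
`∇f(x)ᵀd < 0` makes the Armijo inequality hold for all small `t > 0`, already with reference
value `f(x) ≤ F`. Feasibility for small `t` comes from convexity of each `gᵢ` and the splitting
`γ(t) = (1 - t²)(x + t/(1+t) d) + t² (x + s)`: the first point lies on the feasible segment, and
either `gᵢ(x + s) ≤ 0`, or the constraint is inactive at `x + t̃ d`, in which case
`gᵢ(γ(t)) ≤ t ((1 - t) gᵢ(x + t̃ d)/t̃ + t gᵢ(x + s)) < 0` for small `t`. Since `δ^h → 0⁺`, some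
trial step is accepted, and the first accepted one is either `1` or preceded by a rejected `t*/δ`.
-/

open Filter Topology Set

theorem eventually_le_add_mul_of_hasDerivWithinAt_Ioi {φ : ℝ → ℝ} {L σ : ℝ}
    (hφ : HasDerivWithinAt φ L (Ioi 0) 0) (hL : L < 0) (hσ : σ < 1) :
    ∀ᶠ t in 𝓝[>] 0, φ t ≤ φ 0 + σ * t * L := by
  have hslope := (hasDerivWithinAt_iff_tendsto_slope' (lt_irrefl 0)).mp hφ
  filter_upwards [hslope.eventually_lt_const (by nlinarith : L < σ * L), self_mem_nhdsWithin]
    with t hlt (ht : 0 < t)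
  rw [slope_def_field, sub_zero, div_lt_iff₀ ht] at hlt
  linarith

section QuadraticCurve

variable {E : Type*}

theorem hasDerivAt_quadratic_curve [NormedAddCommGroup E] [NormedSpace ℝ E] (x d s : E) :
    HasDerivAt (fun t : ℝ => x + t • d + t ^ 2 • (s - d)) d 0 := by
  have := (((hasDerivAt_id (0 : ℝ)).smul_const d).const_add x).add
    ((hasDerivAt_pow 2 (0 : ℝ)).smul_const (s - d))
  exact this.congr_deriv (by simp)

variable [AddCommGroup E] [Module ℝ E] {g : E → ℝ}

theorem ConvexOn.apply_add_smul_le_of_nonpos (hg : ConvexOn ℝ univ g) {x d : E} (hx : g x ≤ 0)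
    {β τ : ℝ} (hβ : 0 ≤ β) (hβτ : β ≤ τ) (hτ : 0 < τ) :
    g (x + β • d) ≤ β / τ * g (x + τ • d) := by
  have hθ : β / τ ≤ 1 := (div_le_one hτ).mpr hβτ
  have hsplit : x + β • d = (1 - β / τ) • x + (β / τ) • (x + τ • d) := by
    match_scalars
    · ring
    · field_simp
  have := hg.2 (mem_univ x) (mem_univ (x + τ • d)) (sub_nonneg.mpr hθ) (by positivity)
    (sub_add_cancel 1 _)
  rw [← hsplit, smul_eq_mul, smul_eq_mul] at this
  nlinarith [mul_nonneg (sub_nonneg.mpr hθ) (neg_nonneg.mpr hx)]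

theorem ConvexOn.apply_quadratic_curve_le (hg : ConvexOn ℝ univ g) (x d s : E) {t : ℝ}
    (ht0 : 0 ≤ t) (ht1 : t ≤ 1) :
    g (x + t • d + t ^ 2 • (s - d)) ≤
      (1 - t ^ 2) * g (x + (t / (1 + t)) • d) + t ^ 2 * g (x + s) := by
  have hsplit : x + t • d + t ^ 2 • (s - d) =
      (1 - t ^ 2) • (x + (t / (1 + t)) • d) + t ^ 2 • (x + s) := by
    have : 1 + t ≠ 0 := by positivity
    match_scalars <;> field_simp <;> ring
  rw [hsplit]
  exact hg.2 (mem_univ _) (mem_univ _) (by nlinarith) (sq_nonneg t) (sub_add_cancel 1 _)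

theorem ConvexOn.eventually_quadratic_curve_nonpos (hg : ConvexOn ℝ univ g) {x d s : E}
    (hd : ∀ α ∈ Icc (0 : ℝ) 1, g (x + α • d) ≤ 0) {τ : ℝ} (hτ : 0 < τ)
    (hs : g (x + s) ≤ 0 ∨ g (x + τ • d) < 0) :
    ∀ᶠ t in 𝓝[>] (0 : ℝ), g (x + t • d + t ^ 2 • (s - d)) ≤ 0 := by
  have hβ {t : ℝ} (ht : 0 < t) : 0 ≤ t / (1 + t) ∧ t / (1 + t) ≤ t :=
    ⟨by positivity, div_le_self ht.le (by linarith)⟩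
  rcases hs with hs | hA
  · filter_upwards [Ioo_mem_nhdsGT one_pos] with t ⟨ht0, ht1⟩
    have hgβ := hd (t / (1 + t)) ⟨(hβ ht0).1, (hβ ht0).2.trans ht1.le⟩
    exact (hg.apply_quadratic_curve_le x d s ht0.le ht1.le).trans <| add_nonpos
      (mul_nonpos_of_nonneg_of_nonpos (by nlinarith) hgβ)
      (mul_nonpos_of_nonneg_of_nonpos (sq_nonneg t) hs)
  set A := g (x + τ • d)
  set B := g (x + s)
  have hbracket : ∀ᶠ t in 𝓝 (0 : ℝ), (1 - t) * (A / τ) + t * B < 0 :=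
    ((by fun_prop : Continuous fun t : ℝ => (1 - t) * (A / τ) + t * B).tendsto' 0 (A / τ)
      (by simp)).eventually_lt_const (div_neg_of_neg_of_pos hA hτ)
  filter_upwards [Ioo_mem_nhdsGT one_pos, Ioo_mem_nhdsGT hτ,
    hbracket.filter_mono nhdsWithin_le_nhds] with t ⟨ht0, ht1⟩ htτ hneg
  have hx : g x ≤ 0 := by simpa using hd 0 (left_mem_Icc.mpr zero_le_one)
  have hgβ := hg.apply_add_smul_le_of_nonpos (d := d) hx (hβ ht0).1
    ((hβ ht0).2.trans htτ.2.le) hτ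
  calc g (x + t • d + t ^ 2 • (s - d))
      ≤ (1 - t ^ 2) * g (x + (t / (1 + t)) • d) + t ^ 2 * B :=
        hg.apply_quadratic_curve_le x d s ht0.le ht1.le
    _ ≤ (1 - t ^ 2) * (t / (1 + t) / τ * A) + t ^ 2 * B :=
        add_le_add_left (mul_le_mul_of_nonneg_left hgβ (by nlinarith)) _
    _ = t * ((1 - t) * (A / τ) + t * B) := by
        field_simp
        ring
    _ ≤ 0 := mul_nonpos_of_nonneg_of_nonpos ht0.le hneg.le

end QuadraticCurve

theorem exists_pow_of_eventually_nhdsGT {P : ℝ → Prop} (hP : ∀ᶠ t in 𝓝[>] 0, P t) {δ : ℝ}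
    (hδ0 : 0 < δ) (hδ1 : δ < 1) : ∃ h : ℕ, P (δ ^ h) :=
  ((tendsto_pow_atTop_nhdsWithin_zero_of_lt_one hδ0 hδ1).eventually hP).exists

theorem pow_eq_one_or_not_pow_div_of_forall_lt {P : ℝ → Prop} {δ : ℝ} (hδ : δ ≠ 0) {k : ℕ}
    (hmin : ∀ h < k, ¬ P (δ ^ h)) : δ ^ k = 1 ∨ ¬ P (δ ^ k / δ) := by
  cases k with
  | zero => exact .inl (pow_zero δ)
  | succ k => exact .inr (by simpa [pow_succ, hδ] using hmin k k.lt_succ_self)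

theorem stmt_7_general {n m : ℕ}
    (f : EuclideanSpace ℝ (Fin n) → ℝ) (hf : ContDiff ℝ 1 f)
    (g : EuclideanSpace ℝ (Fin n) → Fin m → ℝ)
    (hg_conv : ∀ i, ConvexOn ℝ Set.univ (fun y => g y i))
    (x d s : EuclideanSpace ℝ (Fin n))
    (hd_feas : ∀ α ∈ Set.Icc (0 : ℝ) 1, ∀ i, g (x + α • d) i ≤ 0)
    (hd_desc : fderiv ℝ f x d < 0)
    (σ δ : ℝ) (hσ : σ ∈ Set.Ioo (0 : ℝ) 1) (hδ : δ ∈ Set.Ioo (0 : ℝ) 1)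
    (ttil : ℝ) (httil : ttil ∈ Set.Ioo (0 : ℝ) 1)
    (γ : ℝ → EuclideanSpace ℝ (Fin n))
    (hγ : ∀ t, γ t = x + t • d + t ^ 2 • (s - d))
    (F : ℝ) (hF : f x ≤ F)
    (hsd : s = d ∨ ∀ i, g (x + ttil • d) i = 0 → g (x + s) i ≤ 0) :
    (∃ h : ℕ, (∀ i, g (γ (δ ^ h)) i ≤ 0) ∧
        f (γ (δ ^ h)) ≤ F + σ * δ ^ h * fderiv ℝ f x d) ∧
    (∀ hstar : ℕ,
      ((∀ i, g (γ (δ ^ hstar)) i ≤ 0) ∧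
        f (γ (δ ^ hstar)) ≤ F + σ * δ ^ hstar * fderiv ℝ f x d) →
      (∀ h' < hstar, ¬ ((∀ i, g (γ (δ ^ h')) i ≤ 0) ∧
        f (γ (δ ^ h')) ≤ F + σ * δ ^ h' * fderiv ℝ f x d)) →
      (δ ^ hstar = 1 ∨ (∃ i, 0 < g (γ (δ ^ hstar / δ)) i) ∨
        f (γ (δ ^ hstar / δ)) > F + σ * (δ ^ hstar / δ) * fderiv ℝ f x d)) := by
  have hArmijo : ∀ᶠ t in 𝓝[>] (0 : ℝ), f (γ t) ≤ F + σ * t * fderiv ℝ f x d := by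
    have hφ : HasDerivAt (fun t : ℝ => f (x + t • d + t ^ 2 • (s - d))) (fderiv ℝ f x d) 0 :=
      (hf.differentiable one_ne_zero x).hasFDerivAt.comp_hasDerivAt_of_eq 0
        (hasDerivAt_quadratic_curve x d s) (by simp)
    filter_upwards [eventually_le_add_mul_of_hasDerivWithinAt_Ioi hφ.hasDerivWithinAt hd_desc
      hσ.2] with t ht
    simp only [zero_smul, add_zero, ne_eq, OfNat.ofNat_ne_zero, not_false_eq_true, zero_pow] at ht
    rw [hγ]
    linarith
  have hFeas : ∀ᶠ t in 𝓝[>] (0 : ℝ), ∀ i, g (γ t) i ≤ 0 := by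
    simp only [hγ]
    refine eventually_all.2 fun i => (hg_conv i).eventually_quadratic_curve_nonpos
      (fun α hα => hd_feas α hα i) httil.1 ?_
    rcases hsd with rfl | hsd
    · exact .inl (by simpa using hd_feas 1 (right_mem_Icc.2 zero_le_one) i)
    by_cases hs : g (x + s) i ≤ 0
    · exact .inl hs
    · exact .inr ((hd_feas ttil (Ioo_subset_Icc_self httil) i).lt_of_ne fun h => hs (hsd i h))
  refine ⟨exists_pow_of_eventually_nhdsGT (hFeas.and hArmijo) hδ.1 hδ.2, fun hstar _ hmin => ?_⟩
  simpa only [not_and_or, not_forall, not_le, gt_iff_lt] using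
    pow_eq_one_or_not_pow_div_of_forall_lt
      (P := fun t => (∀ i, g (γ t) i ≤ 0) ∧ f (γ t) ≤ F + σ * t * fderiv ℝ f x d) hδ.1.ne' hmin

/-- finite termination of the non-monotone Armijo-type curve search, where the
reference value `F` satisfies `F ≥ f(x)`, and characterization of the returned stepsize. -/
theorem stmt_7 {n m : ℕ}
    (f : EuclideanSpace ℝ (Fin n) → ℝ) (hf : ContDiff ℝ 1 f)
    (g : EuclideanSpace ℝ (Fin n) → Fin m → ℝ)
    (hg_smooth : ∀ i, ContDiff ℝ 1 (fun y => g y i))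
    (hg_conv : ∀ i, ConvexOn ℝ Set.univ (fun y => g y i))
    (x d s : EuclideanSpace ℝ (Fin n))
    (hx : ∀ i, g x i ≤ 0)
    (hd_feas : ∀ α ∈ Set.Icc (0 : ℝ) 1, ∀ i, g (x + α • d) i ≤ 0)
    (hd_desc : fderiv ℝ f x d < 0)
    (σ δ : ℝ) (hσ : σ ∈ Set.Ioo (0 : ℝ) 1) (hδ : δ ∈ Set.Ioo (0 : ℝ) 1)
    (ttil : ℝ) (httil : ttil ∈ Set.Ioo (0 : ℝ) 1)
    (γ : ℝ → EuclideanSpace ℝ (Fin n))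
    (hγ : ∀ t, γ t = x + t • d + t ^ 2 • (s - d))
    (F : ℝ) (hF : f x ≤ F)
    (hsd : s = d ∨ ∀ i, g (x + ttil • d) i = 0 → g (x + s) i ≤ 0) :
    (∃ h : ℕ, (∀ i, g (γ (δ ^ h)) i ≤ 0) ∧
        f (γ (δ ^ h)) ≤ F + σ * δ ^ h * fderiv ℝ f x d) ∧
    (∀ hstar : ℕ,
      ((∀ i, g (γ (δ ^ hstar)) i ≤ 0) ∧
        f (γ (δ ^ hstar)) ≤ F + σ * δ ^ hstar * fderiv ℝ f x d) →
      (∀ h' < hstar, ¬ ((∀ i, g (γ (δ ^ h')) i ≤ 0) ∧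
        f (γ (δ ^ h')) ≤ F + σ * δ ^ h' * fderiv ℝ f x d)) →
      (δ ^ hstar = 1 ∨ (∃ i, 0 < g (γ (δ ^ hstar / δ)) i) ∨
        f (γ (δ ^ hstar / δ)) > F + σ * (δ ^ hstar / δ) * fderiv ℝ f x d)) :=
  stmt_7_general f hf g hg_conv x d s hd_feas hd_desc σ δ hσ hδ ttil httil γ hγ F hF hsd
end

section
/- Let g : ℝⁿ → ℝᵐ be continuously differentiable with each component gᵢ convex, and let Ω = {x ∈ ℝⁿ : gᵢ(x) ≤ 0 for all i ∈ {1,…,m}}. Let x ∈ Ω, let d ∈ ℝⁿ satisfy x + α′·d ∈ Ω for all α′ ∈ [0,1], let α ∈ (0,1), t̃ ∈ (0,1), ε > 0, β > 0, δ ∈ (0,1), and let v ∈ ℝⁿ. Define Ĩ = {i ∈ {1,…,m} : gᵢ(x + t̃·d) ≥ −ε}, and assume gᵢ(x + α·d + β·v) ≤ 0 for all i ∈ Ĩ. Then there exists h̄ ∈ ℕ such that x + α·d + δ^{h̄}·β·v ∈ Ω; in particular the adaptive momentum reduction β_k = max_{h∈ℕ}{δ^h·β : x + α·d + δ^h·β·v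 ∈ Ω} is well defined and returns β_k > 0. -/
/-!
Each constraint set `{gᵢ ≤ 0}` is convex. If constraint `i` is nearly active at `x + t̃ d`, then
`x + α d + δʰ β v` lies on the segment between the feasible points `x + α d` and `x + α d + β v`.
Otherwise `gᵢ (x + t̃ d) < 0`, and convexity along the feasible segment `[x, x + d]` forces
`gᵢ (x + α d) < 0`; since convex functions on `ℝⁿ` are continuous, the constraint then holds as soon
as `δʰ β` is small. With finitely many constraints a single `h` works for all of them, and the least
such `h` gives the largest admissible `δʰ β`.
-/

open Filter Set Topology

theorem ConvexOn.neg_of_mem_openSegment {E : Type*} [AddCommGroup E] [Module ℝ E] {s : Set E}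
    {f : E → ℝ} (hf : ConvexOn ℝ s f) {a b z : E} (ha : a ∈ s) (hb : b ∈ s) (hfa : f a < 0)
    (hfb : f b ≤ 0) (hz : z ∈ openSegment ℝ a b) : f z < 0 := by
  obtain ⟨p, q, hp, hq, hpq, rfl⟩ := hz
  have hconv := hf.2 ha hb hp.le hq.le hpq
  simp only [smul_eq_mul] at hconv
  linarith [mul_neg_of_pos_of_neg hp hfa, mul_nonpos_of_nonneg_of_nonpos hq.le hfb]

theorem ConvexOn.neg_of_mem_Ioo {φ : ℝ → ℝ} (hφ : ConvexOn ℝ (Icc 0 1) φ) (h0 : φ 0 ≤ 0)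
    (h1 : φ 1 ≤ 0) {t s : ℝ} (ht : t ∈ Ioo 0 1) (hφt : φ t < 0) (hs : s ∈ Ioo 0 1) : φ s < 0 := by
  have ht' : t ∈ Icc 0 1 := Ioo_subset_Icc_self ht
  rcases lt_trichotomy s t with hst | rfl | hts
  · refine hφ.neg_of_mem_openSegment ht' (left_mem_Icc.2 zero_le_one) hφt h0 ?_
    rw [openSegment_symm, openSegment_eq_Ioo ht.1]
    exact ⟨hs.1, hst⟩
  · exact hφt
  · refine hφ.neg_of_mem_openSegment ht' (right_mem_Icc.2 zero_le_one) hφt h1 ?_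
    rw [openSegment_eq_Ioo ht.2]
    exact ⟨hts, hs.2⟩

theorem ConvexOn.comp_add_smul {E : Type*} [AddCommGroup E] [Module ℝ E] {f : E → ℝ}
    (hf : ConvexOn ℝ univ f) (x d : E) : ConvexOn ℝ univ (fun s : ℝ => f (x + s • d)) :=
  (hf.translate_right x).comp_linearMap (LinearMap.toSpanSingleton ℝ E d)

theorem exists_max_pow_mul {P : ℕ → Prop} (hP : ∃ h, P h) {δ β : ℝ} (hδ₀ : 0 ≤ δ) (hδ₁ : δ ≤ 1)
    (hβ : 0 ≤ β) : ∃ h, P h ∧ ∀ h', P h' → δ ^ h' * β ≤ δ ^ h * β := by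
  classical
  exact ⟨Nat.find hP, Nat.find_spec hP, fun h' hh' =>
    mul_le_mul_of_nonneg_right (pow_le_pow_of_le_one hδ₀ hδ₁ (Nat.find_min' hP hh')) hβ⟩

theorem eventually_le_zero_of_nearly_active {E : Type*} [NormedAddCommGroup E] [NormedSpace ℝ E]
    [FiniteDimensional ℝ E] {f : E → ℝ} (hf : ConvexOn ℝ univ f) {x d v : E}
    (hd : ∀ s ∈ Icc (0 : ℝ) 1, f (x + s • d) ≤ 0) {α t ε β δ : ℝ} (hα : α ∈ Ioo 0 1)
    (ht : t ∈ Ioo 0 1) (hε : 0 ≤ ε) (hδ : δ ∈ Ico 0 1)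
    (hv : -ε ≤ f (x + t • d) → f (x + α • d + β • v) ≤ 0) :
    ∀ᶠ h : ℕ in atTop, f (x + α • d + (δ ^ h * β) • v) ≤ 0 := by
  have hαd : f (x + α • d) ≤ 0 := hd α (Ioo_subset_Icc_self hα)
  by_cases hnear : -ε ≤ f (x + t • d)
  · refine Eventually.of_forall fun h => ?_
    have hsub : Convex ℝ {y | f y ≤ 0} := by simpa using hf.convex_le 0
    simpa [mul_smul] using hsub.add_smul_mem hαd (hv hnear)
      ⟨pow_nonneg hδ.1 h, pow_le_one₀ hδ.1 hδ.2.le⟩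
  · have hline := (hf.comp_add_smul x d).subset (subset_univ _) (convex_Icc 0 1)
    have hneg : f (x + α • d) < 0 :=
      hline.neg_of_mem_Ioo (by simpa using hd 0 (by simp)) (by simpa using hd 1 (by simp)) ht
        (by linarith [not_le.1 hnear]) hα
    have hcont : Continuous fun s : ℝ => f (x + α • d + s • v) :=
      hf.locallyLipschitz.continuous.comp (by fun_prop)
    have hlim : Tendsto (fun h : ℕ => δ ^ h * β) atTop (𝓝 0) := by
      simpa using (tendsto_pow_atTop_nhds_zero_of_lt_one hδ.1 hδ.2).mul_const β
    have hlim' := (hcont.tendsto 0).comp hlim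
    rw [zero_smul, add_zero] at hlim'
    exact (hlim'.eventually (eventually_lt_nhds hneg)).mono fun _ h => h.le

theorem stmt_11_general {n m : ℕ} (g : EuclideanSpace ℝ (Fin n) → Fin m → ℝ)
    (hg_conv : ∀ i, ConvexOn ℝ Set.univ (fun y => g y i))
    (x : EuclideanSpace ℝ (Fin n))
    (d : EuclideanSpace ℝ (Fin n))
    (hd_feas : ∀ α' ∈ Set.Icc (0 : ℝ) 1, ∀ i, g (x + α' • d) i ≤ 0)
    (α ttil ε β δ : ℝ)
    (hα : α ∈ Set.Ioo (0 : ℝ) 1) (httil : ttil ∈ Set.Ioo (0 : ℝ) 1)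
    (hε : 0 < ε) (hβ : 0 < β) (hδ : δ ∈ Set.Ioo (0 : ℝ) 1)
    (v : EuclideanSpace ℝ (Fin n))
    (hfeas : ∀ i, -ε ≤ g (x + ttil • d) i → g (x + α • d + β • v) i ≤ 0) :
    (∃ hbar : ℕ, ∀ i, g (x + α • d + (δ ^ hbar * β) • v) i ≤ 0) ∧
    (∃ βk : ℝ, 0 < βk ∧
      (∃ h : ℕ, βk = δ ^ h * β ∧ ∀ i, g (x + α • d + βk • v) i ≤ 0) ∧
      ∀ h : ℕ, (∀ i, g (x + α • d + (δ ^ h * β) • v) i ≤ 0) → δ ^ h * β ≤ βk) := by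
  have hfeasible : ∀ᶠ h : ℕ in atTop, ∀ i, g (x + α • d + (δ ^ h * β) • v) i ≤ 0 :=
    eventually_all.2 fun i => eventually_le_zero_of_nearly_active (hg_conv i)
      (fun s hs => hd_feas s hs i) hα httil hε.le ⟨hδ.1.le, hδ.2⟩ (hfeas i)
  obtain ⟨hbar, hbar_feas⟩ := hfeasible.exists
  obtain ⟨h, hh, hmax⟩ :=
    exists_max_pow_mul (P := fun h => ∀ i, g (x + α • d + (δ ^ h * β) • v) i ≤ 0)
      ⟨hbar, hbar_feas⟩ hδ.1.le hδ.2.le hβ.le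
  exact ⟨⟨hbar, hbar_feas⟩, δ ^ h * β, mul_pos (pow_pos hδ.1 h) hβ, ⟨h, rfl, hh⟩, hmax⟩

/-- Lemma reduction_beta: well-definedness of the adaptive momentum
reduction. If `x + α·d + β·v` is feasible w.r.t. the (nearly) active constraints at
`x + t̃·d`, then some reduced momentum stepsize `δ^h̄·β` yields a feasible point, and the
maximal such value `β_k > 0` exists. -/
theorem stmt_11 {n m : ℕ} (g : EuclideanSpace ℝ (Fin n) → Fin m → ℝ)
    (hg_smooth : ∀ i, ContDiff ℝ 1 (fun y => g y i))
    (hg_conv : ∀ i, ConvexOn ℝ Set.univ (fun y => g y i))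
    (x : EuclideanSpace ℝ (Fin n)) (hx : ∀ i, g x i ≤ 0)
    (d : EuclideanSpace ℝ (Fin n))
    (hd_feas : ∀ α' ∈ Set.Icc (0 : ℝ) 1, ∀ i, g (x + α' • d) i ≤ 0)
    (α ttil ε β δ : ℝ)
    (hα : α ∈ Set.Ioo (0 : ℝ) 1) (httil : ttil ∈ Set.Ioo (0 : ℝ) 1)
    (hε : 0 < ε) (hβ : 0 < β) (hδ : δ ∈ Set.Ioo (0 : ℝ) 1)
    (v : EuclideanSpace ℝ (Fin n))
    (hfeas : ∀ i, -ε ≤ g (x + ttil • d) i → g (x + α • d + β • v) i ≤ 0) :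
    (∃ hbar : ℕ, ∀ i, g (x + α • d + (δ ^ hbar * β) • v) i ≤ 0) ∧
    (∃ βk : ℝ, 0 < βk ∧
      (∃ h : ℕ, βk = δ ^ h * β ∧ ∀ i, g (x + α • d + βk • v) i ≤ 0) ∧
      ∀ h : ℕ, (∀ i, g (x + α • d + (δ ^ h * β) • v) i ≤ 0) → δ ^ h * β ≤ βk) :=
  stmt_11_general g hg_conv x d hd_feas α ttil ε β δ hα httil hε hβ hδ v hfeas
end

section
/- Let f : ℝⁿ → ℝ be continuously differentiable, let δ ∈ (0,1) and σ ∈ (0,1), and let {x_k}, {d_k}, {s_k} ⊆ ℝⁿ be sequences converging respectively to x̄, d̄, s̄ ∈ ℝⁿ. For each k define the quadratic curve γ_k(t) = x_k + t·d_k + t²·(s_k − d_k). Suppose that for every q ∈ ℕ and every k, f(γ_k(δ^q)) > f(x_k) + σ·δ^q·∇f(x_k)ᵀd_k. Then ∇f(x̄)ᵀd̄ ≥ 0. -/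
/-!
Pass to the limit `k → ∞` in the failed Armijo test at each fixed stepsize `δ^q`: by continuity of
`f` and `∇f`, it still fails, non-strictly, at `(x̄, d̄, s̄)`: `φ(δ^q) ≥ φ(0) + σ δ^q φ'(0)` for
`φ(t) = f(x̄ + t d̄ + t² (s̄ - d̄))`, whose derivative at `0` is `∇f(x̄)ᵀd̄`. Dividing by `δ^q → 0⁺`
gives `φ'(0) ≥ σ φ'(0)`, hence `φ'(0) ≥ 0` since `σ < 1`.
-/

open Filter Topology

section QuadCurve

variable {E : Type*} [NormedAddCommGroup E] [NormedSpace ℝ E]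

def quadCurve (x d s : E) (t : ℝ) : E := x + t • d + t ^ 2 • (s - d)

@[simp]
lemma quadCurve_zero (x d s : E) : quadCurve x d s 0 = x := by
  simp [quadCurve]

lemma hasDerivAt_quadCurve (x d s : E) (t : ℝ) :
    HasDerivAt (quadCurve x d s) (d + (2 * t) • (s - d)) t := by
  have hlin : HasDerivAt (fun t : ℝ => t • d) d t := by
    simpa using (hasDerivAt_id t).smul_const d
  have hquad : HasDerivAt (fun t : ℝ => t ^ 2 • (s - d)) ((2 * t) • (s - d)) t := by
    simpa using (hasDerivAt_pow 2 t).smul_const (s - d)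
  exact (((hasDerivAt_const t x).add hlin).add hquad).congr_deriv (by rw [zero_add])

lemma hasDerivAt_quadCurve_zero (x d s : E) : HasDerivAt (quadCurve x d s) d 0 := by
  simpa using hasDerivAt_quadCurve x d s 0

lemma Filter.Tendsto.quadCurve {ι : Type*} {l : Filter ι} {x d s : ι → E} {x₀ d₀ s₀ : E}
    (hx : Tendsto x l (𝓝 x₀)) (hd : Tendsto d l (𝓝 d₀)) (hs : Tendsto s l (𝓝 s₀)) (t : ℝ) :
    Tendsto (fun i => _root_.quadCurve (x i) (d i) (s i) t) l
      (𝓝 (_root_.quadCurve x₀ d₀ s₀ t)) :=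
  (hx.add (hd.const_smul t)).add ((hs.sub hd).const_smul (t ^ 2))

lemma armijo_fail_of_tendsto {f : E → ℝ} (hf : ContDiff ℝ 1 f) (σ t : ℝ)
    {ι : Type*} {l : Filter ι} [l.NeBot] {x d s : ι → E} {x₀ d₀ s₀ : E}
    (hx : Tendsto x l (𝓝 x₀)) (hd : Tendsto d l (𝓝 d₀)) (hs : Tendsto s l (𝓝 s₀))
    (hfail : ∀ i, f (x i) + σ * t * fderiv ℝ f (x i) (d i) < f (quadCurve (x i) (d i) (s i) t)) :
    f x₀ + σ * t * fderiv ℝ f x₀ d₀ ≤ f (quadCurve x₀ d₀ s₀ t) := by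
  have hderiv : Tendsto (fun i => fderiv ℝ f (x i) (d i)) l (𝓝 (fderiv ℝ f x₀ d₀)) :=
    (isBoundedBilinearMap_apply.continuous.tendsto _).comp
      ((((hf.continuous_fderiv one_ne_zero).tendsto _).comp hx).prodMk_nhds hd)
  exact le_of_tendsto_of_tendsto'
    (((hf.continuous.tendsto _).comp hx).add (hderiv.const_mul (σ * t)))
    ((hf.continuous.tendsto _).comp (hx.quadCurve hd hs t)) fun i => (hfail i).le

end QuadCurve

lemma nonneg_of_hasDerivAt_of_armijo_fail {φ : ℝ → ℝ} {D σ : ℝ} (hφ : HasDerivAt φ D 0)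
    (hσ : σ < 1) {ι : Type*} {l : Filter ι} [l.NeBot] {t : ι → ℝ} (ht : Tendsto t l (𝓝[>] 0))
    (hfail : ∀ i, φ 0 + σ * t i * D ≤ φ (t i)) :
    0 ≤ D := by
  have hslope : Tendsto (fun i => (t i)⁻¹ * (φ (t i) - φ 0)) l (𝓝 D) := by
    simpa [Function.comp_def] using hφ.tendsto_slope_zero_right.comp ht
  have hσD : σ * D ≤ D := by
    refine ge_of_tendsto hslope ((ht.eventually self_mem_nhdsWithin).mono fun i hti => ?_)
    have hti : 0 < t i := hti
    rw [le_inv_mul_iff₀ hti]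
    linarith [hfail i]
  nlinarith

/-- if along convergent sequences `x_k → x̄`, `d_k → d̄`, `s_k → s̄` the
Armijo-type sufficient decrease condition fails along the quadratic curves at every stepsize
`δ^q`, then `∇f(x̄)ᵀd̄ ≥ 0`. -/
theorem stmt_13 {n : ℕ} (f : EuclideanSpace ℝ (Fin n) → ℝ) (hf : ContDiff ℝ 1 f)
    (δ σ : ℝ) (hδ : δ ∈ Set.Ioo (0 : ℝ) 1) (hσ : σ ∈ Set.Ioo (0 : ℝ) 1)
    (x d s : ℕ → EuclideanSpace ℝ (Fin n))
    (xbar dbar sbar : EuclideanSpace ℝ (Fin n))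
    (hx : Filter.Tendsto x Filter.atTop (nhds xbar))
    (hd : Filter.Tendsto d Filter.atTop (nhds dbar))
    (hs : Filter.Tendsto s Filter.atTop (nhds sbar))
    (hfail : ∀ q k : ℕ,
      f (x k + (δ ^ q) • d k + (δ ^ q) ^ 2 • (s k - d k)) >
        f (x k) + σ * δ ^ q * fderiv ℝ f (x k) (d k)) :
    0 ≤ fderiv ℝ f xbar dbar := by
  have hφ : HasDerivAt (fun t => f (quadCurve xbar dbar sbar t)) (fderiv ℝ f xbar dbar) 0 := by
    have hfx : HasFDerivAt f (fderiv ℝ f xbar) (quadCurve xbar dbar sbar 0) := by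
      simpa using (hf.differentiable one_ne_zero xbar).hasFDerivAt
    exact hfx.comp_hasDerivAt 0 (hasDerivAt_quadCurve_zero xbar dbar sbar)
  have hstep : Tendsto (fun q : ℕ => δ ^ q) atTop (𝓝[>] 0) :=
    tendsto_nhdsWithin_of_tendsto_nhds_of_eventually_within _
      (tendsto_pow_atTop_nhds_zero_of_lt_one hδ.1.le hδ.2)
      (Eventually.of_forall fun q => pow_pos hδ.1 q)
  refine nonneg_of_hasDerivAt_of_armijo_fail hφ hσ.2 hstep fun q => ?_
  simpa using armijo_fail_of_tendsto hf σ (δ ^ q) hx hd hs (hfail q)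
end
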